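/- arXiv:2006.02286 — 4 statements merged into one kernel-verified Lean document; each statement's English description precedes it below -/
import Mathlib

section
/- Let Σ be symmetric positive definite, τ ∈ ℝ^d, and suppose β* maximizes f(β) = βᵀτ/(βᵀΣβ)^{1/2} over {β : β ≥ 0, ‖β‖ = 1}. If β*ᵀτ < 0, then β* has exactly one nonzero coordinate (i.e., β* is a Cartesian unit vector). -/
/-!
`f` is invariant under positive scaling, so `β*` maximizes `f` over all nonzero `β ≥ 0`. If `β*`
had two nonzero coordinates, split `β* = x + y` with `x, y ≥ 0` of disjoint supports. These do not
lie on a common ray, so strict convexity of the norm `‖z‖_Σ = (zᵀΣz)^{1/2}` gives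
`‖β*‖_Σ < ‖x‖_Σ + ‖y‖_Σ`. With `m = f(β*) < 0`, maximality gives `xᵀτ ≤ m ‖x‖_Σ` and
`yᵀτ ≤ m ‖y‖_Σ`, hence `β*ᵀτ ≤ m (‖x‖_Σ + ‖y‖_Σ) < m ‖β*‖_Σ = β*ᵀτ`.
-/

open Matrix

noncomputable section

section SameRay

variable {R M : Type*} [CommSemiring R] [PartialOrder R] [IsStrictOrderedRing R]
  [AddCommMonoid M] [Module R M] {x y : M}

lemma left_ne_zero_of_not_sameRay (h : ¬SameRay R x y) : x ≠ 0 := by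
  rintro rfl
  exact h (SameRay.zero_left y)

lemma right_ne_zero_of_not_sameRay (h : ¬SameRay R x y) : y ≠ 0 := by
  rintro rfl
  exact h (SameRay.zero_right x)

end SameRay

section Pi

variable {R n : Type*} [CommRing R] [LinearOrder R] [IsStrictOrderedRing R]

lemma not_sameRay_of_apply_ne_zero_of_apply_eq_zero {x y : n → R} {u : n} (hx : x u ≠ 0)
    (hy : y u = 0) (hy0 : y ≠ 0) : ¬SameRay R x y := by
  intro h
  obtain ⟨r₁, r₂, hr₁, -, hxy⟩ := h.exists_pos (fun hx0 => hx (by simp [hx0])) hy0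
  have := congrFun hxy u
  simp only [Pi.smul_apply, smul_eq_mul, hy, mul_zero, mul_eq_zero] at this
  exact this.elim hr₁.ne' hx

lemma exists_nonneg_not_sameRay_add_eq {β : n → R} (hβ : ∀ i, 0 ≤ β i) {u v : n}
    (huv : u ≠ v) (hu : β u ≠ 0) (hv : β v ≠ 0) :
    ∃ x y : n → R, (∀ i, 0 ≤ x i) ∧ (∀ i, 0 ≤ y i) ∧ ¬SameRay R x y ∧ x + y = β := by
  classical
  refine ⟨β - Pi.single v (β v), Pi.single v (β v), fun i => ?_, fun i => ?_, ?_,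
    sub_add_cancel _ _⟩
  · by_cases hi : i = v <;> simp [hi, hβ]
  · by_cases hi : i = v <;> simp [hi, hβ]
  · refine not_sameRay_of_apply_ne_zero_of_apply_eq_zero (u := u) (by simpa [huv] using hu)
      (by simp [huv]) ?_
    simpa using hv

end Pi

variable {n : Type*} [Fintype n]

lemma Matrix.PosDef.sqrt_dotProduct_mulVec_add_lt {S : Matrix n n ℝ} (hS : S.PosDef)
    {x y : n → ℝ} (h : ¬SameRay ℝ x y) :
    √((x + y) ⬝ᵥ (S *ᵥ (x + y))) < √(x ⬝ᵥ (S *ᵥ x)) + √(y ⬝ᵥ (S *ᵥ y)) := by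
  let E := S.toNormedAddCommGroup hS
  let _ := S.toInnerProductSpace hS.posSemidef
  -- the inner product induced by `S` is `⟪x, y⟫ = (S *ᵥ y) ⬝ᵥ star x`
  have hnorm (z : n → ℝ) : @norm _ E.toNorm z = √(z ⬝ᵥ (S *ᵥ z)) := by
    rw [dotProduct_comm]
    rfl
  simpa only [hnorm] using norm_add_lt_of_not_sameRay (E := n → ℝ) h

def sharpeRatio (S : Matrix n n ℝ) (τ x : n → ℝ) : ℝ := (x ⬝ᵥ τ) / √(x ⬝ᵥ (S *ᵥ x))

variable {S : Matrix n n ℝ} {τ : n → ℝ}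

lemma sharpeRatio_smul {c : ℝ} (hc : 0 < c) (x : n → ℝ) :
    sharpeRatio S τ (c • x) = sharpeRatio S τ x := by
  have hq : (c • x) ⬝ᵥ (S *ᵥ (c • x)) = c ^ 2 * (x ⬝ᵥ (S *ᵥ x)) := by
    rw [mulVec_smul, smul_dotProduct, dotProduct_smul, smul_eq_mul, smul_eq_mul]; ring
  rw [sharpeRatio, sharpeRatio, hq, Real.sqrt_mul (sq_nonneg c), Real.sqrt_sq hc.le,
    smul_dotProduct, smul_eq_mul, mul_div_mul_left _ _ hc.ne']

lemma sharpeRatio_le_of_forall_sqrt_dotProduct_self_eq_one {β : n → ℝ}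
    (hmax : ∀ γ : n → ℝ, (∀ i, 0 ≤ γ i) → √(γ ⬝ᵥ γ) = 1 → sharpeRatio S τ γ ≤ sharpeRatio S τ β)
    (x : n → ℝ) (hx : ∀ i, 0 ≤ x i) (hx0 : x ≠ 0) :
    sharpeRatio S τ x ≤ sharpeRatio S τ β := by
  have hr : 0 < √(x ⬝ᵥ x) := Real.sqrt_pos.2 (by simpa using dotProduct_star_self_pos_iff.2 hx0)
  rw [← sharpeRatio_smul (inv_pos.2 hr)]
  refine hmax _ (fun i => mul_nonneg (inv_pos.2 hr).le (hx i)) ?_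
  rw [smul_dotProduct, dotProduct_smul, smul_eq_mul, smul_eq_mul, ← mul_assoc,
    Real.sqrt_mul (mul_self_nonneg _), Real.sqrt_mul_self (inv_pos.2 hr).le, inv_mul_cancel₀ hr.ne']

lemma sharpeRatio_add_lt_max (hS : S.PosDef) {x y : n → ℝ} (h : ¬SameRay ℝ x y)
    (hneg : (x + y) ⬝ᵥ τ < 0) :
    sharpeRatio S τ (x + y) < max (sharpeRatio S τ x) (sharpeRatio S τ y) := by
  have hpos (z : n → ℝ) (hz : z ≠ 0) : 0 < √(z ⬝ᵥ (S *ᵥ z)) :=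
    Real.sqrt_pos.2 (by simpa using hS.dotProduct_mulVec_pos hz)
  have hNx := hpos x (left_ne_zero_of_not_sameRay h)
  have hNy := hpos y (right_ne_zero_of_not_sameRay h)
  have hN := hpos (x + y) fun hxy => by simp [hxy] at hneg
  set r := sharpeRatio S τ (x + y)
  by_contra! hle
  have hxτ : x ⬝ᵥ τ ≤ r * √(x ⬝ᵥ (S *ᵥ x)) := (div_le_iff₀ hNx).1 ((le_max_left _ _).trans hle)
  have hyτ : y ⬝ᵥ τ ≤ r * √(y ⬝ᵥ (S *ᵥ y)) := (div_le_iff₀ hNy).1 ((le_max_right _ _).trans hle)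
  have hr : r < 0 := div_neg_of_neg_of_pos hneg hN
  have := calc (x + y) ⬝ᵥ τ = x ⬝ᵥ τ + y ⬝ᵥ τ := add_dotProduct x y τ
    _ ≤ r * (√(x ⬝ᵥ (S *ᵥ x)) + √(y ⬝ᵥ (S *ᵥ y))) := by rw [mul_add]; exact add_le_add hxτ hyτ
    _ < r * √((x + y) ⬝ᵥ (S *ᵥ (x + y))) :=
      mul_lt_mul_of_neg_left (hS.sqrt_dotProduct_mulVec_add_lt h) hr
    _ = (x + y) ⬝ᵥ τ := div_mul_cancel₀ _ hN.ne'
  exact this.false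

/-- If `β*` maximizes `f(β) = βᵀτ/(βᵀΣβ)^{1/2}` over the nonnegative
Euclidean unit sphere and `β*ᵀτ < 0`, then `β*` has exactly one nonzero coordinate. -/
theorem stmt_4 {d : ℕ} (S : Matrix (Fin d) (Fin d) ℝ) (hS : S.PosDef) (τ : Fin d → ℝ)
    (β : Fin d → ℝ) (hβnn : ∀ i, 0 ≤ β i) (hβnorm : Real.sqrt (β ⬝ᵥ β) = 1)
    (hmax : ∀ γ : Fin d → ℝ, (∀ i, 0 ≤ γ i) → Real.sqrt (γ ⬝ᵥ γ) = 1 →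
      (γ ⬝ᵥ τ) / Real.sqrt (γ ⬝ᵥ (S *ᵥ γ)) ≤ (β ⬝ᵥ τ) / Real.sqrt (β ⬝ᵥ (S *ᵥ β)))
    (hneg : β ⬝ᵥ τ < 0) :
    ∃! u : Fin d, β u ≠ 0 := by
  have hle := sharpeRatio_le_of_forall_sqrt_dotProduct_self_eq_one hmax
  obtain ⟨u, hu⟩ : ∃ u, β u ≠ 0 := Function.ne_iff.1 fun h => by simp [h] at hβnorm
  refine ⟨u, hu, fun v hv => ?_⟩
  by_contra hvu
  obtain ⟨x, y, hx, hy, hxy, rfl⟩ := exists_nonneg_not_sameRay_add_eq hβnn (Ne.symm hvu) hu hv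
  exact (sharpeRatio_add_lt_max hS hxy hneg).not_ge <| max_le
    (hle x hx (left_ne_zero_of_not_sameRay hxy)) (hle y hy (right_ne_zero_of_not_sameRay hxy))
end
end

section
/- Let Σ be symmetric positive definite, τ ∈ ℝ^d, and suppose all coordinates of τ are negative. Then the maximum of f(β) = βᵀτ/(βᵀΣβ)^{1/2} over {β ≥ 0, ‖β‖ = 1} is attained at the Cartesian unit vector e_{u*} where u* = argmax_u τ_u/√(Σ_{uu}), and equals τ_{u*}/√(Σ_{u*u*}). -/
open Matrix

/-! Cauchy–Schwarz for the form of `Σ` gives `Σ_uv ≤ √Σ_uu √Σ_vv`, hence for `β ≥ 0` the triangle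
inequality `√(βᵀΣβ) ≤ ∑_u β_u √Σ_uu`. Since `τ_u ≤ c √Σ_uu` with `c = τ_{u*}/√Σ_{u*u*} < 0`, this
gives `βᵀτ ≤ c ∑_u β_u √Σ_uu ≤ c √(βᵀΣβ)`, with equality at `β = e_{u*}`. -/

namespace Matrix

variable {n : Type*} [Fintype n] {S : Matrix n n ℝ}

theorem PosSemidef.apply_le_sqrt_mul_sqrt (hS : S.PosSemidef) (i j : n) :
    S i j ≤ √(S i i) * √(S j j) := by
  classical
  have hCS := LinearMap.BilinForm.apply_mul_apply_le_of_forall_zero_le (toLinearMap₂' ℝ S)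
    (fun x => by simpa [toLinearMap₂'_apply'] using hS.dotProduct_mulVec_nonneg x)
    (Pi.single i 1) (Pi.single j 1)
  simp only [toLinearMap₂'_apply', mulVec_single_one, single_one_dotProduct, col_apply] at hCS
  have hsymm : S j i = S i j := by simpa using hS.isHermitian.apply i j
  rw [← Real.sqrt_mul hS.diag_nonneg]
  exact Real.le_sqrt_of_sq_le (by rwa [hsymm, ← sq] at hCS)

theorem PosSemidef.sqrt_dotProduct_mulVec_le_sum (hS : S.PosSemidef) {γ : n → ℝ} (hγ : 0 ≤ γ) :
    √(γ ⬝ᵥ (S *ᵥ γ)) ≤ ∑ u, γ u * √(S u u) := by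
  refine Real.sqrt_le_iff.mpr
    ⟨Finset.sum_nonneg fun u _ => mul_nonneg (hγ u) (Real.sqrt_nonneg _), ?_⟩
  calc γ ⬝ᵥ (S *ᵥ γ) = ∑ i, ∑ j, γ i * γ j * S i j := by
        simp only [dotProduct, mulVec, Finset.mul_sum]
        exact Finset.sum_congr rfl fun i _ => Finset.sum_congr rfl fun j _ => by ring
    _ ≤ ∑ i, ∑ j, γ i * γ j * (√(S i i) * √(S j j)) := by
        gcongr with i _ j _
        · exact mul_nonneg (hγ i) (hγ j)
        · exact hS.apply_le_sqrt_mul_sqrt i j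
    _ = (∑ u, γ u * √(S u u)) ^ 2 := by
        rw [sq, Finset.sum_mul_sum]
        exact Finset.sum_congr rfl fun i _ => Finset.sum_congr rfl fun j _ => by ring

theorem PosDef.dotProduct_div_sqrt_le {c : ℝ} (hS : S.PosDef) (hc : c ≤ 0) {τ γ : n → ℝ}
    (hτ : ∀ u, τ u / √(S u u) ≤ c) (hγ : 0 ≤ γ) (hγ₀ : γ ≠ 0) :
    (γ ⬝ᵥ τ) / √(γ ⬝ᵥ (S *ᵥ γ)) ≤ c := by
  have hτ' : ∀ u, τ u ≤ c * √(S u u) := fun u =>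
    (div_le_iff₀ (Real.sqrt_pos.mpr hS.diag_pos)).mp (hτ u)
  have hq : 0 < γ ⬝ᵥ (S *ᵥ γ) := by simpa using hS.dotProduct_mulVec_pos hγ₀
  rw [div_le_iff₀ (Real.sqrt_pos.mpr hq)]
  calc γ ⬝ᵥ τ ≤ ∑ u, γ u * (c * √(S u u)) :=
        Finset.sum_le_sum fun u _ => mul_le_mul_of_nonneg_left (hτ' u) (hγ u)
    _ = c * ∑ u, γ u * √(S u u) := by
        rw [Finset.mul_sum]
        exact Finset.sum_congr rfl fun u _ => by ring
    _ ≤ c * √(γ ⬝ᵥ (S *ᵥ γ)) :=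
        mul_le_mul_of_nonpos_left (hS.posSemidef.sqrt_dotProduct_mulVec_le_sum hγ) hc

end Matrix

/-- If all coordinates of `τ` are negative, the maximum of
`f(β) = βᵀτ/(βᵀΣβ)^{1/2}` over `{β ≥ 0, ‖β‖ = 1}` is attained at the Cartesian unit
vector `e_{u*}`, where `u* = argmax_u τ_u/√Σ_{uu}`, with value `τ_{u*}/√Σ_{u*u*}`. -/
theorem stmt_5 {d : ℕ} (S : Matrix (Fin d) (Fin d) ℝ) (hS : S.PosDef) (τ : Fin d → ℝ)
    (hτ : ∀ u, τ u < 0) (u0 : Fin d)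
    (hu0 : ∀ u, τ u / Real.sqrt (S u u) ≤ τ u0 / Real.sqrt (S u0 u0)) :
    (∀ i, 0 ≤ (Pi.single u0 1 : Fin d → ℝ) i) ∧
    Real.sqrt ((Pi.single u0 1 : Fin d → ℝ) ⬝ᵥ (Pi.single u0 1 : Fin d → ℝ)) = 1 ∧
    ((Pi.single u0 1 : Fin d → ℝ) ⬝ᵥ τ) /
        Real.sqrt ((Pi.single u0 1 : Fin d → ℝ) ⬝ᵥ (S *ᵥ (Pi.single u0 1 : Fin d → ℝ))) =
      τ u0 / Real.sqrt (S u0 u0) ∧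
    (∀ γ : Fin d → ℝ, (∀ i, 0 ≤ γ i) → Real.sqrt (γ ⬝ᵥ γ) = 1 →
      (γ ⬝ᵥ τ) / Real.sqrt (γ ⬝ᵥ (S *ᵥ γ)) ≤ τ u0 / Real.sqrt (S u0 u0)) := by
  have hc : τ u0 / √(S u0 u0) ≤ 0 :=
    (div_neg_of_neg_of_pos (hτ u0) (Real.sqrt_pos.mpr hS.diag_pos)).le
  have hsingle : (0 : Fin d → ℝ) ≤ Pi.single u0 1 := Pi.single_nonneg.mpr zero_le_one
  refine ⟨hsingle, by simp, by simp, ?_⟩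
  intro γ hγ hγ₁
  refine hS.dotProduct_div_sqrt_le hc hu0 hγ ?_
  rintro rfl
  simp at hγ₁
end

section
/- Let Σ be symmetric positive definite, τ ∈ ℝ^d, β* a maximizer of f(β) = βᵀτ/(βᵀΣβ)^{1/2} over {β ≥ 0, ‖β‖ = 1}, and suppose β* has at least two nonzero coordinates. Then β*ᵀτ ≥ 0. -/
/-!
Suppose `β ⬝ᵥ τ < 0` and `β u, β v > 0` with `u ≠ v`. Some nonzero `w` supported on `{u, v}` is
orthogonal to `τ`, and `β + t • w` stays nonnegative for small `t`. Moving along `w` leaves the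
numerator `β ⬝ᵥ τ` unchanged, while for a suitable sign of `t` the positive definite quadratic form
strictly grows. With a negative numerator this strictly increases the objective, and since the
objective is invariant under positive scaling, normalising `β + t • w` beats `β` on the sphere.
-/

open Matrix Filter Topology

noncomputable def objective {ι : Type*} [Fintype ι] (S : Matrix ι ι ℝ) (τ γ : ι → ℝ) : ℝ :=
  (γ ⬝ᵥ τ) / √(γ ⬝ᵥ (S *ᵥ γ))

section

variable {ι : Type*} [Fintype ι]

lemma objective_smul (S : Matrix ι ι ℝ) (τ γ : ι → ℝ) {c : ℝ} (hc : 0 < c) :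
    objective S τ (c • γ) = objective S τ γ := by
  have hsqrt : √((c • γ) ⬝ᵥ (S *ᵥ (c • γ))) = c * √(γ ⬝ᵥ (S *ᵥ γ)) := by
    rw [mulVec_smul, smul_dotProduct, dotProduct_smul, smul_eq_mul, smul_eq_mul, ← mul_assoc,
      Real.sqrt_mul (mul_self_nonneg c), Real.sqrt_mul_self hc.le]
  rw [objective, objective, hsqrt, smul_dotProduct, smul_eq_mul, mul_div_mul_left _ _ hc.ne']

lemma objective_le_of_forall_sphere {S : Matrix ι ι ℝ} {τ β : ι → ℝ}
    (hmax : ∀ γ : ι → ℝ, (∀ i, 0 ≤ γ i) → √(γ ⬝ᵥ γ) = 1 → objective S τ γ ≤ objective S τ β)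
    {γ : ι → ℝ} (hγ : ∀ i, 0 ≤ γ i) (hγ0 : γ ≠ 0) :
    objective S τ γ ≤ objective S τ β := by
  set n := √(γ ⬝ᵥ γ)
  have hn : 0 < n := Real.sqrt_pos.2 <|
    (Finset.sum_nonneg fun i _ => mul_self_nonneg (γ i)).lt_of_ne'
      (dotProduct_self_eq_zero.not.2 hγ0)
  rw [← objective_smul S τ γ (inv_pos.2 hn)]
  refine hmax _ (fun i => mul_nonneg (inv_nonneg.2 hn.le) (hγ i)) ?_
  rw [smul_dotProduct, dotProduct_smul, smul_eq_mul, smul_eq_mul, ← mul_assoc,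
    Real.sqrt_mul (mul_self_nonneg _), Real.sqrt_mul_self (inv_nonneg.2 hn.le),
    inv_mul_cancel₀ hn.ne']

omit [Fintype ι] in
lemma eventually_nonneg_add_smul [Finite ι] {β w : ι → ℝ} (hβ : ∀ i, 0 ≤ β i)
    (hw : ∀ i, w i ≠ 0 → 0 < β i) : ∀ᶠ t in 𝓝 (0 : ℝ), ∀ i, 0 ≤ (β + t • w) i := by
  rw [eventually_all]
  intro i
  by_cases hwi : w i = 0
  · simp [hwi, hβ i]
  · have hlim : Tendsto (fun t : ℝ => β i + t * w i) (𝓝 0) (𝓝 (β i)) := by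
      simpa using ((continuous_id.mul continuous_const).const_add (β i)).tendsto (0 : ℝ)
    filter_upwards [hlim.eventually_const_lt (hw i hwi)] with t ht
    simpa using ht.le

lemma dotProduct_mulVec_add_smul (S : Matrix ι ι ℝ) (β w : ι → ℝ) (t : ℝ) :
    (β + t • w) ⬝ᵥ (S *ᵥ (β + t • w)) =
      β ⬝ᵥ (S *ᵥ β) + t * (w ⬝ᵥ (S *ᵥ β) + β ⬝ᵥ (S *ᵥ w)) + t ^ 2 * (w ⬝ᵥ (S *ᵥ w)) := by
  simp only [mulVec_add, mulVec_smul, dotProduct_add, add_dotProduct, dotProduct_smul,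
    smul_dotProduct, smul_eq_mul]
  ring

/-- Along a nonzero direction the positive definite form `q(β + t w) = q β + b t + a t²`, `a > 0`,
exceeds `q β` for every small `t` of the sign of `b`. -/
lemma exists_dotProduct_mulVec_lt_add_smul {S : Matrix ι ι ℝ} (hS : S.PosDef) (β : ι → ℝ)
    {w : ι → ℝ} (hw : w ≠ 0) {P : ℝ → Prop} (hP : ∀ᶠ t in 𝓝 0, P t) :
    ∃ t, P t ∧ β ⬝ᵥ (S *ᵥ β) < (β + t • w) ⬝ᵥ (S *ᵥ (β + t • w)) := by
  have ha : 0 < w ⬝ᵥ (S *ᵥ w) := by simpa using hS.dotProduct_mulVec_pos hw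
  simp only [dotProduct_mulVec_add_smul]
  set b := w ⬝ᵥ (S *ᵥ β) + β ⬝ᵥ (S *ᵥ w)
  rcases le_or_gt 0 b with hb | hb
  · obtain ⟨t, hPt, ht⟩ := ((hP.filter_mono nhdsWithin_le_nhds).and
      (self_mem_nhdsWithin : Set.Ioi (0 : ℝ) ∈ 𝓝[>] 0)).exists
    exact ⟨t, hPt, by nlinarith [mul_nonneg ht.le hb, mul_pos (pow_pos ht 2) ha]⟩
  · obtain ⟨t, hPt, ht⟩ := ((hP.filter_mono nhdsWithin_le_nhds).and
      (self_mem_nhdsWithin : Set.Iio (0 : ℝ) ∈ 𝓝[<] 0)).exists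
    have ht' : t < 0 := ht
    exact ⟨t, hPt, by nlinarith [mul_pos_of_neg_of_neg ht' hb, mul_nonneg (sq_nonneg t) ha.le]⟩

lemma objective_lt_of_lt {S : Matrix ι ι ℝ} {τ γ δ : ι → ℝ} (hτ : δ ⬝ᵥ τ = γ ⬝ᵥ τ)
    (hneg : γ ⬝ᵥ τ < 0) (hγ : 0 < γ ⬝ᵥ (S *ᵥ γ)) (hγδ : γ ⬝ᵥ (S *ᵥ γ) < δ ⬝ᵥ (S *ᵥ δ)) :
    objective S τ γ < objective S τ δ := by
  have := div_lt_div_of_pos_left (neg_pos.2 hneg) (Real.sqrt_pos.2 hγ)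
    (Real.sqrt_lt_sqrt hγ.le hγδ)
  rw [objective, objective, hτ]
  rwa [neg_div, neg_div, neg_lt_neg_iff] at this

lemma exists_ne_zero_supported_on_pair_dotProduct_eq_zero [DecidableEq ι] {u v : ι}
    (huv : u ≠ v) (τ : ι → ℝ) :
    ∃ w : ι → ℝ, w ≠ 0 ∧ w ⬝ᵥ τ = 0 ∧ ∀ i, w i ≠ 0 → i = u ∨ i = v := by
  by_cases hτu : τ u = 0
  · refine ⟨Pi.single u 1, by simp, by simp [hτu], fun i hi => .inl ?_⟩
    by_contra hiu
    simp [hiu] at hi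
  · refine ⟨τ v • Pi.single u 1 - τ u • Pi.single v 1, fun h => hτu ?_, ?_, fun i hi => ?_⟩
    · simpa [huv] using congrFun h v
    · simp only [sub_dotProduct, smul_dotProduct, single_dotProduct, smul_eq_mul]
      ring
    · by_contra! h
      simp [h.1, h.2] at hi

end

/-- If `β*` maximizes `f(β) = βᵀτ/(βᵀΣβ)^{1/2}` over the nonnegative
Euclidean unit sphere and has at least two nonzero coordinates, then `β*ᵀτ ≥ 0`. -/
theorem stmt_7 {d : ℕ} (S : Matrix (Fin d) (Fin d) ℝ) (hS : S.PosDef) (τ : Fin d → ℝ)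
    (β : Fin d → ℝ) (hβnn : ∀ i, 0 ≤ β i) (hβnorm : Real.sqrt (β ⬝ᵥ β) = 1)
    (hmax : ∀ γ : Fin d → ℝ, (∀ i, 0 ≤ γ i) → Real.sqrt (γ ⬝ᵥ γ) = 1 →
      (γ ⬝ᵥ τ) / Real.sqrt (γ ⬝ᵥ (S *ᵥ γ)) ≤ (β ⬝ᵥ τ) / Real.sqrt (β ⬝ᵥ (S *ᵥ β)))
    (htwo : ∃ u v : Fin d, u ≠ v ∧ β u ≠ 0 ∧ β v ≠ 0) :
    0 ≤ β ⬝ᵥ τ := by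
  by_contra! hneg
  obtain ⟨u, v, huv, hu, hv⟩ := htwo
  have hβ0 : β ≠ 0 := by rintro rfl; simp at hβnorm
  have hqβ : 0 < β ⬝ᵥ (S *ᵥ β) := by simpa using hS.dotProduct_mulVec_pos hβ0
  obtain ⟨w, hw0, hwτ, hwuv⟩ := exists_ne_zero_supported_on_pair_dotProduct_eq_zero huv τ
  have hwβ : ∀ i, w i ≠ 0 → 0 < β i := by
    intro i hi
    rcases hwuv i hi with rfl | rfl
    exacts [(hβnn i).lt_of_ne' hu, (hβnn i).lt_of_ne' hv]
  obtain ⟨t, hnn, hlt⟩ :=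
    exists_dotProduct_mulVec_lt_add_smul hS β hw0 (eventually_nonneg_add_smul hβnn hwβ)
  have hδ0 : β + t • w ≠ 0 := fun h => by
    simp only [h, zero_dotProduct] at hlt
    linarith
  have hδτ : (β + t • w) ⬝ᵥ τ = β ⬝ᵥ τ := by simp [add_dotProduct, hwτ]
  exact (objective_le_of_forall_sphere hmax hnn hδ0).not_gt
    (objective_lt_of_lt hδτ hneg hqβ hlt)
end

section
/- Let τ ~ N(0, Σ) with Σ symmetric positive definite, let U ⊆ {1,…,d} be a nonempty index set, Π the orthogonal projector onto the coordinates in U, Σ̄ the Moore–Penrose pseudoinverse of ΠΣΠ, X̃ := Σ̄^{1/2}τ and z := τ − ΣΣ̄τ. Then X̃ and z are independent Gaussian vectors. -/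
/-!
`X̃` and `z` are linear images of the same Gaussian vector, so they are jointly Gaussian and it
suffices that their cross-covariance `Σ̄^{1/2} Σ (1 - Σ̄ Σ)` vanishes. Since `Σ̄` commutes with
`ΠΣΠ`, it satisfies `Π Σ̄ = Σ̄ = Σ̄ Π`, so the Penrose condition `Σ̄ ΠΣΠ Σ̄ = Σ̄` becomes
`Σ̄ Σ Σ̄ = Σ̄`. Then `X = (1 - Σ̄ Σ) Σ̄^{1/2}` has `X Xᵀ = (1 - Σ̄ Σ) Σ̄ (1 - Σ Σ̄) = 0`, hence
`X = 0`, i.e. `Σ̄^{1/2} Σ Σ̄ = Σ̄^{1/2}`, which makes the cross-covariance vanish.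
-/

open Matrix MeasureTheory ProbabilityTheory

noncomputable section

/-- The standard Gaussian measure `N(0, I_n)` on `ℝ^n`. -/
def stdGaussian (n : ℕ) : Measure (Fin n → ℝ) :=
  Measure.pi fun _ => gaussianReal 0 1

open scoped ComplexOrder in
/-- The positive semidefinite square root of a positive semidefinite matrix
(the definition `Matrix.PosSemidef.sqrt` of the older Mathlib, since removed). -/
def Matrix.PosSemidef.sqrt {n 𝕜 : Type*} [Fintype n] [DecidableEq n] [RCLike 𝕜]
    {A : Matrix n n 𝕜} (hA : A.PosSemidef) : Matrix n n 𝕜 :=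
  hA.1.eigenvectorUnitary.1 * diagonal ((↑) ∘ (√·) ∘ hA.1.eigenvalues) *
  (star hA.1.eigenvectorUnitary : Matrix n n 𝕜)

namespace Matrix

section Sqrt

open scoped ComplexOrder

variable {n 𝕜 : Type*} [Fintype n] [DecidableEq n] [RCLike 𝕜]

lemma PosSemidef.sqrt_mul_self {A : Matrix n n 𝕜} (hA : A.PosSemidef) :
    hA.sqrt * hA.sqrt = A := by
  have hU : (star hA.1.eigenvectorUnitary : Matrix n n 𝕜) * hA.1.eigenvectorUnitary.1 = 1 :=
    Unitary.coe_star_mul_self _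
  have hD : diagonal ((↑) ∘ (√·) ∘ hA.1.eigenvalues) * diagonal ((↑) ∘ (√·) ∘ hA.1.eigenvalues)
      = diagonal (RCLike.ofReal ∘ hA.1.eigenvalues : n → 𝕜) := by
    rw [diagonal_mul_diagonal]
    congr 1; funext i
    simp only [Function.comp_apply]
    rw [← RCLike.ofReal_mul, Real.mul_self_sqrt (hA.eigenvalues_nonneg i)]
  conv_rhs => rw [hA.1.spectral_theorem, Unitary.conjStarAlgAut_apply]
  unfold Matrix.PosSemidef.sqrt
  simp only [Matrix.mul_assoc]
  rw [← Matrix.mul_assoc _ (hA.1.eigenvectorUnitary.1), hU, Matrix.one_mul,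
    ← Matrix.mul_assoc (diagonal _) (diagonal _), hD]

lemma PosSemidef.posSemidef_sqrt {A : Matrix n n 𝕜} (hA : A.PosSemidef) : hA.sqrt.PosSemidef := by
  have hd : (diagonal ((↑) ∘ (√·) ∘ hA.1.eigenvalues) : Matrix n n 𝕜).PosSemidef := by
    rw [posSemidef_diagonal_iff]
    intro i
    simp [Real.sqrt_nonneg]
  have := hd.mul_mul_conjTranspose_same (hA.1.eigenvectorUnitary.1)
  unfold Matrix.PosSemidef.sqrt
  rwa [star_eq_conjTranspose]

end Sqrt

variable {n : Type*} [Fintype n]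

lemma mul_mul_eq_self_of_compression {α : Type*} [CommRing α] {P S G : Matrix n n α}
    (hPt : Pᵀ = P) (hPP : P * P = P) (hSt : Sᵀ = S) (hGt : Gᵀ = G)
    (h2 : G * (P * S * P) * G = G) (h3 : ((P * S * P) * G)ᵀ = (P * S * P) * G) :
    G * S * G = G := by
  have hMt : (P * S * P)ᵀ = P * S * P := by
    rw [transpose_mul, transpose_mul, hPt, hSt, Matrix.mul_assoc]
  have hcomm : G * (P * S * P) = (P * S * P) * G := by
    rw [← h3, transpose_mul, hGt, hMt]
  have hG : P * S * P * G * G = G := by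
    rw [← hcomm, h2]
  have hPG : P * G = G := by
    rw [← hG]
    simp only [← Matrix.mul_assoc, hPP]
  have hGP : G * P = G := by
    simpa only [transpose_mul, hPt, hGt] using congrArg transpose hPG
  calc G * S * G = G * P * S * (P * G) := by rw [hGP, hPG]
    _ = G * (P * S * P) * G := by simp only [Matrix.mul_assoc]
    _ = G := h2

lemma mul_mul_eq_self_of_mul_self_eq [DecidableEq n] {R S G : Matrix n n ℝ} (hRt : Rᵀ = R)
    (hSt : Sᵀ = S) (hRR : R * R = G) (hG : G * S * G = G) : R * S * G = R := by
  have hGt : Gᵀ = G := by rw [← hRR, transpose_mul, hRt]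
  have hX : (1 - G * S) * R * ((1 - G * S) * R)ᴴ = 0 := by
    rw [conjTranspose_eq_transpose_of_trivial, transpose_mul, hRt, transpose_sub, transpose_one,
      transpose_mul, hSt, hGt, Matrix.mul_assoc, ← Matrix.mul_assoc R, hRR, ← Matrix.mul_assoc,
      sub_mul, one_mul, hG, sub_self, Matrix.zero_mul]
  have hGSR : G * S * R = R := by
    have h := self_mul_conjTranspose_eq_zero.mp hX
    rw [sub_mul, one_mul, sub_eq_zero] at h
    exact h.symm
  calc R * S * G = (G * S * R)ᵀ := by
        rw [transpose_mul, transpose_mul, hRt, hSt, hGt, Matrix.mul_assoc]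
    _ = R := by rw [hGSR, hRt]

lemma mul_mul_transpose_one_sub_mul_eq_zero [DecidableEq n] {R T S G : Matrix n n ℝ}
    (hRt : Rᵀ = R) (hTt : Tᵀ = T) (hTT : T * T = S) (hRR : R * R = G) (hG : G * S * G = G) :
    R * T * ((1 - S * G) * T)ᵀ = 0 := by
  have hSt : Sᵀ = S := by rw [← hTT, transpose_mul, hTt]
  have hGt : Gᵀ = G := by rw [← hRR, transpose_mul, hRt]
  calc R * T * ((1 - S * G) * T)ᵀ = R * (T * T) * (1 - G * S) := by
        rw [transpose_mul, transpose_sub, transpose_one, transpose_mul, hSt, hGt, hTt]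
        simp only [Matrix.mul_assoc]
    _ = R * S - R * S * G * S := by
        rw [hTT, mul_sub, mul_one, Matrix.mul_assoc (R * S)]
    _ = 0 := by rw [mul_mul_eq_self_of_mul_self_eq hRt hSt hRR hG, sub_self]

end Matrix

section GaussianVectors

variable {ι : Type*} [Fintype ι]

lemma hasGaussianLaw_id_pi_gaussianReal :
    HasGaussianLaw id (Measure.pi fun _ : ι => gaussianReal 0 1) :=
  (iIndepFun_pi (μ := fun _ : ι => gaussianReal 0 1) (X := fun _ => id)
    fun _ => aemeasurable_id).hasGaussianLaw
    fun i => (measurePreserving_eval (fun _ : ι => gaussianReal 0 1) i).hasLaw.hasGaussianLaw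

lemma covariance_eval_pi_gaussianReal [DecidableEq ι] (k l : ι) :
    cov[fun x => x k, fun x => x l; Measure.pi fun _ : ι => gaussianReal 0 1]
      = (1 : Matrix ι ι ℝ) k l := by
  rcases eq_or_ne k l with rfl | hkl
  · rw [covariance_self (measurable_pi_apply k).aemeasurable, one_apply_eq,
      ← variance_id_map (measurable_pi_apply k).aemeasurable, (measurePreserving_eval _ k).map_eq,
      variance_id_gaussianReal, NNReal.coe_one]
  · rw [one_apply_ne hkl]
    exact ((iIndepFun_pi (μ := fun _ : ι => gaussianReal 0 1) (X := fun _ => id)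
      fun _ => aemeasurable_id).indepFun hkl).covariance_eq_zero
      (hasGaussianLaw_id_pi_gaussianReal.eval k).memLp_two
      (hasGaussianLaw_id_pi_gaussianReal.eval l).memLp_two

lemma covariance_mulVec_pi_gaussianReal {κ κ' : Type*} (A : Matrix κ ι ℝ) (B : Matrix κ' ι ℝ)
    (i : κ) (j : κ') :
    cov[fun x => (A *ᵥ x) i, fun x => (B *ᵥ x) j; Measure.pi fun _ : ι => gaussianReal 0 1]
      = (A * Bᵀ) i j := by
  classical
  have hL2 (k : ι) (c : ℝ) : MemLp (fun x : ι → ℝ => c * x k) 2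
      (Measure.pi fun _ : ι => gaussianReal 0 1) :=
    (hasGaussianLaw_id_pi_gaussianReal.eval k).memLp_two.const_mul c
  simp only [mulVec, dotProduct]
  rw [covariance_fun_sum_fun_sum (fun k => hL2 k _) (fun k => hL2 k _)]
  simp only [covariance_const_mul_left, covariance_const_mul_right,
    covariance_eval_pi_gaussianReal, mul_apply, transpose_apply]
  simp [one_apply, mul_comm]

lemma indepFun_mulVec_pi_gaussianReal {κ κ' : Type*} [Fintype κ] [Fintype κ']
    {A : Matrix κ ι ℝ} {B : Matrix κ' ι ℝ} (h : A * Bᵀ = 0) :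
    IndepFun (A *ᵥ ·) (B *ᵥ ·) (Measure.pi fun _ : ι => gaussianReal 0 1) := by
  let L : (ι → ℝ) →L[ℝ] (κ → ℝ) × (κ' → ℝ) :=
    ((mulVecLin A).prod (mulVecLin B)).toContinuousLinearMap
  have hAB : HasGaussianLaw (fun x => (A *ᵥ x, B *ᵥ x))
      (Measure.pi fun _ : ι => gaussianReal 0 1) :=
    hasGaussianLaw_id_pi_gaussianReal.map_fun L
  refine hAB.indepFun_of_covariance_eval fun i j => ?_
  rw [covariance_mulVec_pi_gaussianReal, h, Matrix.zero_apply]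

lemma IndepFun.map_of_comp {Ω Ω' β β' : Type*} [MeasurableSpace Ω] [MeasurableSpace Ω']
    [MeasurableSpace β] [MeasurableSpace β'] {μ : Measure Ω} {h : Ω → Ω'} (hh : Measurable h)
    {f : Ω' → β} {g : Ω' → β'} (hf : Measurable f) (hg : Measurable g)
    (hfg : IndepFun (f ∘ h) (g ∘ h) μ) : IndepFun f g (μ.map h) := by
  rw [indepFun_iff_measure_inter_preimage_eq_mul] at hfg ⊢
  intro s t hs ht
  rw [Measure.map_apply hh ((hf hs).inter (hg ht)), Measure.map_apply hh (hf hs),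
    Measure.map_apply hh (hg ht)]
  exact hfg s t hs ht

lemma indepFun_mulVec_map_pi_gaussianReal {κ κ' : Type*} [Fintype κ] [Fintype κ']
    {T : Matrix ι ι ℝ} {A : Matrix κ ι ℝ} {B : Matrix κ' ι ℝ} (h : A * T * (B * T)ᵀ = 0) :
    IndepFun (A *ᵥ ·) (B *ᵥ ·) ((Measure.pi fun _ : ι => gaussianReal 0 1).map (T *ᵥ ·)) := by
  refine IndepFun.map_of_comp (by fun_prop) (by fun_prop) (by fun_prop) ?_
  simpa only [Function.comp_def, mulVec_mulVec] using indepFun_mulVec_pi_gaussianReal h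

lemma map_mulVec_map_mulVec {κ κ' : Type*} [Fintype κ] [Fintype κ'] (μ : Measure (ι → ℝ))
    (T : Matrix κ ι ℝ) (A : Matrix κ' κ ℝ) :
    (μ.map (T *ᵥ ·)).map (A *ᵥ ·) = μ.map ((A * T) *ᵥ ·) := by
  rw [Measure.map_map (by fun_prop) (by fun_prop)]
  simp only [Function.comp_def, mulVec_mulVec]

end GaussianVectors

theorem stmt_10_general {d : ℕ} (S : Matrix (Fin d) (Fin d) ℝ) (hS : S.PosDef)
    (U : Finset (Fin d))
    (P : Matrix (Fin d) (Fin d) ℝ)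
    (hP : P = Matrix.diagonal fun i => if i ∈ U then (1 : ℝ) else 0)
    (Sb : Matrix (Fin d) (Fin d) ℝ)
    (hp2 : Sb * (P * S * P) * Sb = Sb)
    (hp3 : ((P * S * P) * Sb)ᵀ = (P * S * P) * Sb)
    (hSb : Sb.PosSemidef)
    (N : Measure (Fin d → ℝ))
    (hN : N = (stdGaussian d).map fun x => hS.posSemidef.sqrt *ᵥ x) :
    IndepFun (fun τ => hSb.sqrt *ᵥ τ) (fun τ => τ - S *ᵥ (Sb *ᵥ τ)) N ∧
    (∃ A : Matrix (Fin d) (Fin d) ℝ,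
      N.map (fun τ => hSb.sqrt *ᵥ τ) = (stdGaussian d).map fun x => A *ᵥ x) ∧
    (∃ B : Matrix (Fin d) (Fin d) ℝ,
      N.map (fun τ => τ - S *ᵥ (Sb *ᵥ τ)) = (stdGaussian d).map fun x => B *ᵥ x) := by
  set T := hS.posSemidef.sqrt
  set R := hSb.sqrt
  have hsymm {A : Matrix (Fin d) (Fin d) ℝ} (hA : A.PosSemidef) : Aᵀ = A :=
    (isHermitian_iff_isSymm.mp hA.isHermitian).eq
  have hPt : Pᵀ = P := by rw [hP, diagonal_transpose]
  have hPP : P * P = P := by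
    rw [hP, diagonal_mul_diagonal]
    congr 1 with i
    split_ifs <;> simp
  have hSbSSb : Sb * S * Sb = Sb :=
    mul_mul_eq_self_of_compression hPt hPP (hsymm hS.posSemidef) (hsymm hSb) hp2 hp3
  have hcross : R * T * ((1 - S * Sb) * T)ᵀ = 0 :=
    mul_mul_transpose_one_sub_mul_eq_zero (hsymm hSb.posSemidef_sqrt)
      (hsymm hS.posSemidef.posSemidef_sqrt) hS.posSemidef.sqrt_mul_self hSb.sqrt_mul_self hSbSSb
  have hz : (fun τ => τ - S *ᵥ (Sb *ᵥ τ)) = ((1 - S * Sb) *ᵥ ·) := by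
    funext τ
    rw [sub_mulVec, one_mulVec, mulVec_mulVec]
  subst hN
  rw [hz]
  exact ⟨indepFun_mulVec_map_pi_gaussianReal hcross, ⟨R * T, map_mulVec_map_mulVec _ _ _⟩,
    ⟨(1 - S * Sb) * T, map_mulVec_map_mulVec _ _ _⟩⟩

/-- For `τ ~ N(0, Σ)` with `Σ` symmetric positive definite, `U` a nonempty
index set with coordinate projector `P`, and `Sb` the Moore–Penrose pseudoinverse of
`PΣP` (characterized by the four Penrose conditions; it is positive semidefinite),
the vectors `X̃ = Sb^{1/2} τ` and `z = τ − Σ Sb τ` are independent Gaussian vectors. -/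
theorem stmt_10 {d : ℕ} (S : Matrix (Fin d) (Fin d) ℝ) (hS : S.PosDef)
    (U : Finset (Fin d)) (hU : U.Nonempty)
    (P : Matrix (Fin d) (Fin d) ℝ)
    (hP : P = Matrix.diagonal fun i => if i ∈ U then (1 : ℝ) else 0)
    (Sb : Matrix (Fin d) (Fin d) ℝ)
    (hp1 : (P * S * P) * Sb * (P * S * P) = P * S * P)
    (hp2 : Sb * (P * S * P) * Sb = Sb)
    (hp3 : ((P * S * P) * Sb)ᵀ = (P * S * P) * Sb)
    (hp4 : (Sb * (P * S * P))ᵀ = Sb * (P * S * P))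
    (hSb : Sb.PosSemidef)
    (N : Measure (Fin d → ℝ))
    (hN : N = (stdGaussian d).map fun x => hS.posSemidef.sqrt *ᵥ x) :
    IndepFun (fun τ => hSb.sqrt *ᵥ τ) (fun τ => τ - S *ᵥ (Sb *ᵥ τ)) N ∧
    (∃ A : Matrix (Fin d) (Fin d) ℝ,
      N.map (fun τ => hSb.sqrt *ᵥ τ) = (stdGaussian d).map fun x => A *ᵥ x) ∧
    (∃ B : Matrix (Fin d) (Fin d) ℝ,
      N.map (fun τ => τ - S *ᵥ (Sb *ᵥ τ)) = (stdGaussian d).map fun x => B *ᵥ x) :=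
  stmt_10_general S hS U P hP Sb hp2 hp3 hSb N hN
end
end
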